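/- arXiv:1903.03353 — 2 statements merged into one kernel-verified Lean document; each statement's English description precedes it below -/
import Mathlib

section
/- Let A be an n×n pattern matrix none of whose diagonal entries is 0, and let B be an n×m pattern matrix. Let Ā be the pattern matrix obtained from A by keeping all off-diagonal entries and replacing each diagonal entry A_ii by ∗ if A_ii = 0 and by ? otherwise. Then the structured system (A,B) is strongly structurally controllable if and only if the n×(n+m) pattern matrix [Ā B] has full row rank. -/
/-- The symbols of a pattern matrix: fixed zero (`0`), arbitrary nonzero (`∗`),
and arbitrary (`?`). -/
inductive PSym : Type
  | zero
  | star
  | arb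
  deriving DecidableEq

open Matrix

/-- The pattern class of a pattern matrix: real matrices that are `0` where the pattern
is `0`, nonzero where the pattern is `∗`, and unrestricted where the pattern is `?`. -/
def PatternClass {R C : Type*} (M : Matrix R C PSym) : Set (Matrix R C ℝ) :=
  {A | ∀ i j, (M i j = PSym.zero → A i j = 0) ∧ (M i j = PSym.star → A i j ≠ 0)}

/-- A pattern matrix has full row rank if every member of its pattern class
has full row rank. -/
def PatternFullRowRank {R C : Type*} [Fintype R] [Fintype C] (M : Matrix R C PSym) : Prop :=
  ∀ A ∈ PatternClass M, A.rank = Fintype.card R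

/-- Hautus test: `(A, B)` is controllable iff `[A - λI, B]` has rank `n` for all `λ ∈ ℂ`. -/
def Controllable {n m : ℕ} (A : Matrix (Fin n) (Fin n) ℝ) (B : Matrix (Fin n) (Fin m) ℝ) : Prop :=
  ∀ l : ℂ, (Matrix.fromCols (A.map (Complex.ofReal) - l • (1 : Matrix (Fin n) (Fin n) ℂ))
      (B.map (Complex.ofReal))).rank = n

/-- Hautus test for stabilizability: `[A - λI, B]` has rank `n` for all `λ` with `Re λ ≥ 0`. -/
def Stabilizable {n m : ℕ} (A : Matrix (Fin n) (Fin n) ℝ) (B : Matrix (Fin n) (Fin m) ℝ) : Prop :=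
  ∀ l : ℂ, 0 ≤ l.re →
    (Matrix.fromCols (A.map (Complex.ofReal) - l • (1 : Matrix (Fin n) (Fin n) ℂ))
      (B.map (Complex.ofReal))).rank = n

/-- Strong structural controllability of the structured system `(𝒜, ℬ)`. -/
def StrStrControllable {n m : ℕ} (𝒜 : Matrix (Fin n) (Fin n) PSym)
    (ℬ : Matrix (Fin n) (Fin m) PSym) : Prop :=
  ∀ A ∈ PatternClass 𝒜, ∀ B ∈ PatternClass ℬ, Controllable A B

/-- Strong structural stabilizability of the structured system `(𝒜, ℬ)`. -/
def StrStrStabilizable {n m : ℕ} (𝒜 : Matrix (Fin n) (Fin n) PSym)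
    (ℬ : Matrix (Fin n) (Fin m) PSym) : Prop :=
  ∀ A ∈ PatternClass 𝒜, ∀ B ∈ PatternClass ℬ, Stabilizable A B

/-- The pattern matrix `Ā` obtained from `𝒜` by replacing each diagonal entry by `∗`
if it is `0` and by `?` otherwise, keeping all off-diagonal entries. -/
def barPattern {n : ℕ} (𝒜 : Matrix (Fin n) (Fin n) PSym) : Matrix (Fin n) (Fin n) PSym :=
  fun i j => if i = j then (if 𝒜 i i = PSym.zero then PSym.star else PSym.arb) else 𝒜 i j

/-- The sets of black nodes obtainable in `G(M)` by repeatedly applying the color change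
rule, starting from the all-white coloring. The colorable nodes are the rows of `M`;
every node of `G(M)` corresponds to a column `c`, whose out-neighbors are the rows `k`
with `M k c ≠ 0`, and the edge from `c` to `k` is in `E_∗` iff `M k c = ∗`. A step colors
`j` black when some node `c` has `j` as its only white out-neighbor and `(c, j) ∈ E_∗`. -/
inductive ColorStep {R C : Type*} (M : Matrix R C PSym) : Set R → Prop
  | init : ColorStep M ∅
  | step (S : Set R) (c : C) (j : R)
      (hS : ColorStep M S)
      (hstar : M j c = PSym.star)
      (hwhite : j ∉ S)
      (huniq : ∀ k : R, M k c ≠ PSym.zero → k ∉ S → k = j) :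
      ColorStep M (insert j S)

/-- `G(M)` is colorable if all row-nodes can be colored black by repeated application
of the color change rule. -/
def PatternColorable {R C : Type*} (M : Matrix R C PSym) : Prop :=
  ColorStep M Set.univ

/-! When no diagonal entry of `𝒜` is `0`, the diagonal of `A - λI` is unconstrained, so the
Hautus matrices `[A - λI, B]` with `λ` real are exactly the real members of `P([Ā ℬ])` (shift
the diagonal by a `λ` avoiding the finitely many values that would make an entry of `A` vanish),
and with `λ` complex they are complex members of that pattern. This gives one direction.

For the other, full row rank of a real pattern `M` lets the color change rule color every row
of `G(M)`: if the coloring got stuck at a set `S ≠ univ`, every column of `M` with a `∗` in a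
white row has a second nonzero entry in a white row, so each column can be realized with entries
summing to zero over the white rows, and the indicator of those rows is a nonzero left null
vector. A complete coloring in turn kills every left null vector, over any field, one entry per
color change step; applied over `ℂ` this is the Hautus test. -/

open Matrix

variable {R C : Type*}

def PatternClassOver (F : Type*) [Zero F] (M : Matrix R C PSym) : Set (Matrix R C F) :=
  {A | ∀ i j, (M i j = PSym.zero → A i j = 0) ∧ (M i j = PSym.star → A i j ≠ 0)}

theorem patternClass_eq_patternClassOver (M : Matrix R C PSym) :
    PatternClass M = PatternClassOver ℝ M :=
  rfl

theorem map_mem_patternClassOver {F K : Type*} [DivisionRing F] [Semiring K] [Nontrivial K]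
    (f : F →+* K) {M : Matrix R C PSym} {A : Matrix R C F} (hA : A ∈ PatternClassOver F M) :
    A.map f ∈ PatternClassOver K M := fun i j =>
  ⟨fun h => by simp [(hA i j).1 h], fun h => by simpa using (hA i j).2 h⟩

theorem fromCols_mem_patternClassOver_iff {F : Type*} [Zero F] {C' : Type*}
    {P : Matrix R C PSym} {Q : Matrix R C' PSym} {X : Matrix R C F} {Y : Matrix R C' F} :
    fromCols X Y ∈ PatternClassOver F (fromCols P Q) ↔
      X ∈ PatternClassOver F P ∧ Y ∈ PatternClassOver F Q := by
  simp only [PatternClassOver, Set.mem_ofPred_eq, Sum.forall, fromCols_apply_inl,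
    fromCols_apply_inr, forall_and, and_and_and_comm]

theorem Matrix.rank_eq_card_iff_vecMul_eq_zero {K : Type*} [Field K] [Fintype R] [Fintype C]
    (A : Matrix R C K) : A.rank = Fintype.card R ↔ ∀ v : R → K, v ᵥ* A = 0 → v = 0 := by
  rw [rank_eq_finrank_span_row, ← Set.finrank, eq_comm,
    ← linearIndependent_iff_card_eq_finrank_span, ← vecMul_injective_iff, ← coe_vecMulLinear,
    injective_iff_map_eq_zero]
  rfl

theorem Matrix.rank_eq_card_of_rank_map_eq_card {K L : Type*} [Field K] [Field L] [Fintype R]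
    [Fintype C] (f : K →+* L) {A : Matrix R C K} (h : (A.map f).rank = Fintype.card R) :
    A.rank = Fintype.card R := by
  rw [rank_eq_card_iff_vecMul_eq_zero] at h ⊢
  intro v hv
  have hfv : f ∘ v = 0 := h _ <| funext fun c => by rw [← RingHom.map_vecMul, hv]; simp
  exact funext fun i => by simpa using congrFun hfv i

theorem ColorStep.eq_zero_of_vecMul_eq_zero {F : Type*} [Semiring F] [NoZeroDivisors F]
    [Fintype R] {M : Matrix R C PSym} {S : Set R} (hS : ColorStep M S) {A : Matrix R C F}
    (hA : A ∈ PatternClassOver F M) {v : R → F} (hv : v ᵥ* A = 0) : ∀ j ∈ S, v j = 0 := by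
  induction hS with
  | init => simp
  | step S c j _ hstar _ huniq ih =>
    have hsingle : (v ᵥ* A) c = v j * A j c := by
      refine Finset.sum_eq_single j (fun k _ hkj => ?_) (by simp)
      by_cases hkS : k ∈ S
      · simp [ih k hkS]
      · by_cases hk : M k c = PSym.zero
        · simp [(hA k c).1 hk]
        · exact absurd (huniq k hk hkS) hkj
    have hj : v j = 0 := by
      rw [hv, Pi.zero_apply, eq_comm, mul_eq_zero] at hsingle
      exact hsingle.resolve_right ((hA j c).2 hstar)
    simpa [hj] using ih

theorem PatternColorable.rank_eq_card {K : Type*} [Field K] [Fintype R] [Fintype C]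
    {M : Matrix R C PSym} (hM : PatternColorable M) {A : Matrix R C K}
    (hA : A ∈ PatternClassOver K M) : A.rank = Fintype.card R :=
  (rank_eq_card_iff_vecMul_eq_zero A).2 fun _ hv =>
    funext fun j => ColorStep.eq_zero_of_vecMul_eq_zero hM hA hv j (Set.mem_univ j)

theorem exists_realization_sum_eq_zero [DecidableEq R] (p : R → PSym)
    (W : Finset R) (hp : ∀ j ∈ W, p j = PSym.star → ∃ k ∈ W, k ≠ j ∧ p k ≠ PSym.zero) :
    ∃ a : R → ℝ, (∀ k, (p k = PSym.zero → a k = 0) ∧ (p k = PSym.star → a k ≠ 0)) ∧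
      ∑ k ∈ W, a k = 0 := by
  set b : R → ℝ := fun k => if p k = PSym.star then 1 else 0
  have hb : ∀ k, (p k = PSym.zero → b k = 0) ∧ (p k = PSym.star → b k ≠ 0) := fun k =>
    ⟨fun h => by simp [b, h], fun h => by simp [b, h]⟩
  by_cases hstar : ∃ j ∈ W, p j = PSym.star
  · obtain ⟨j₁, hj₁W, hj₁⟩ := hstar
    obtain ⟨j₂, hj₂W, hne, hj₂⟩ := hp j₁ hj₁W hj₁
    -- the `∗` entries are `1`, except at `j₂`, which balances the sum over `W`
    set s := ∑ k ∈ W.erase j₂, b k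
    have hs : 0 < s := Finset.sum_pos' (fun k _ => by simp only [b]; split_ifs <;> norm_num)
      ⟨j₁, Finset.mem_erase.2 ⟨hne.symm, hj₁W⟩, by simp [b, hj₁]⟩
    refine ⟨Function.update b j₂ (-s), fun k => ?_, ?_⟩
    · rcases eq_or_ne k j₂ with rfl | hk
      · simp [hj₂, hs.ne']
      · simpa [hk] using hb k
    · rw [Finset.sum_update_of_mem hj₂W, Finset.sdiff_singleton_eq_erase, neg_add_cancel]
  · push Not at hstar
    exact ⟨b, hb, Finset.sum_eq_zero fun k hk => by simp [b, hstar k hk]⟩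

theorem not_patternFullRowRank_of_stuck [Fintype R] [Fintype C] {M : Matrix R C PSym}
    {S : Set R} (hS : S ≠ Set.univ)
    (hstuck : ∀ c, ∀ j ∉ S, M j c = PSym.star → ∃ k ∉ S, k ≠ j ∧ M k c ≠ PSym.zero) :
    ¬ PatternFullRowRank M := by
  classical
  set W := Finset.univ.filter (· ∉ S)
  have hcol (c : C) := exists_realization_sum_eq_zero (M · c) W
    (by simpa [W] using hstuck c)
  choose a ha hsum using hcol
  intro hM
  have hrank := hM (of fun k c => a c k) fun k c => ha c k
  rw [rank_eq_card_iff_vecMul_eq_zero] at hrank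
  have hnull := hrank (fun k => if k ∉ S then 1 else 0) <| funext fun c => by
    simp only [vecMul, dotProduct, of_apply, ite_mul, one_mul, zero_mul, ← Finset.sum_filter]
    exact hsum c
  obtain ⟨k, hk⟩ := (Set.ne_univ_iff_exists_notMem S).1 hS
  simpa [hk] using congrFun hnull k

theorem PatternFullRowRank.patternColorable [Fintype R] [Fintype C] {M : Matrix R C PSym}
    (hM : PatternFullRowRank M) : PatternColorable M := by
  have : Nonempty {S : Set R // ColorStep M S} := ⟨⟨∅, .init⟩⟩
  obtain ⟨⟨S, hS⟩, hmax⟩ := Finite.exists_max fun S : {S : Set R // ColorStep M S} => S.1.ncard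
  by_contra hne
  refine not_patternFullRowRank_of_stuck (fun h => hne (h ▸ hS : ColorStep M Set.univ))
    (fun c j hj hstar => ?_) hM
  by_contra! hforced
  have hstep := ColorStep.step S c j hS hstar hj fun k hk hkS => by_contra fun hkj =>
    hk (hforced k hkS hkj)
  have hle : (insert j S).ncard ≤ S.ncard := hmax ⟨_, hstep⟩
  rw [Set.ncard_insert_of_notMem hj] at hle
  omega

section barPattern

variable {n : ℕ} {𝒜 : Matrix (Fin n) (Fin n) PSym}

theorem barPattern_apply_of_ne {i j : Fin n} (h : i ≠ j) : barPattern 𝒜 i j = 𝒜 i j := by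
  simp [barPattern, h]

theorem sub_smul_one_mem_patternClassOver_barPattern {F : Type*} [Ring F]
    (hdiag : ∀ i, 𝒜 i i ≠ PSym.zero) {A : Matrix (Fin n) (Fin n) F}
    (hA : A ∈ PatternClassOver F 𝒜) (l : F) :
    A - l • 1 ∈ PatternClassOver F (barPattern 𝒜) := fun i j => by
  rcases eq_or_ne i j with rfl | hij
  · simp [barPattern, hdiag i]
  · simpa [barPattern_apply_of_ne hij, one_apply_ne hij] using hA i j

theorem add_smul_one_mem_patternClassOver_of_barPattern {F : Type*} [Ring F]
    (hdiag : ∀ i, 𝒜 i i ≠ PSym.zero) {X : Matrix (Fin n) (Fin n) F}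
    (hX : X ∈ PatternClassOver F (barPattern 𝒜)) {l : F} (hl : ∀ i, X i i + l ≠ 0) :
    X + l • 1 ∈ PatternClassOver F 𝒜 := fun i j => by
  rcases eq_or_ne i j with rfl | hij
  · simp [hdiag i, hl i]
  · simpa [barPattern_apply_of_ne hij, one_apply_ne hij] using hX i j

end barPattern

/-- **Corollary (algebraic condition, nonzero diagonal).** If no diagonal entry of `𝒜`
is `0`, then `(𝒜, ℬ)` is strongly structurally controllable iff `[𝒜bar ℬ]` has full
row rank. -/
theorem ssc_iff_full_row_rank_of_diag_ne_zero {n m : ℕ} (𝒜 : Matrix (Fin n) (Fin n) PSym)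
    (ℬ : Matrix (Fin n) (Fin m) PSym) (hdiag : ∀ i, 𝒜 i i ≠ PSym.zero) :
    StrStrControllable 𝒜 ℬ ↔
      PatternFullRowRank (Matrix.fromCols (barPattern 𝒜) ℬ) := by
  constructor
  · intro hssc X hX
    rw [← fromCols_toCols X, patternClass_eq_patternClassOver,
      fromCols_mem_patternClassOver_iff] at hX
    obtain ⟨l, hl⟩ : ∃ l : ℝ, ∀ i, X.toCols₁ i i + l ≠ 0 := by
      obtain ⟨l, hl⟩ := Infinite.exists_notMem_finset (Finset.univ.image fun i => -X.toCols₁ i i)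
      exact ⟨l, fun i h => hl (Finset.mem_image.2 ⟨i, Finset.mem_univ i, by linarith⟩)⟩
    have hshift : (X.toCols₁ + l • 1).map Complex.ofReal - (l : ℂ) • 1 =
        X.toCols₁.map Complex.ofReal := by
      ext i j
      rcases eq_or_ne i j with rfl | hij
      · simp
      · simp [one_apply_ne hij]
    have hc := hssc _ (add_smul_one_mem_patternClassOver_of_barPattern hdiag hX.1 hl) _ hX.2 l
    rw [hshift, ← fromCols_map, fromCols_toCols] at hc
    exact rank_eq_card_of_rank_map_eq_card Complex.ofRealHom (hc.trans (Fintype.card_fin n).symm)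
  · intro hM A hA B hB l
    have hmem := fromCols_mem_patternClassOver_iff.2
      ⟨sub_smul_one_mem_patternClassOver_barPattern hdiag
        (map_mem_patternClassOver Complex.ofRealHom hA) l,
        map_mem_patternClassOver Complex.ofRealHom hB⟩
    exact (hM.patternColorable.rank_eq_card hmem).trans (Fintype.card_fin n)
end

section
/- Let A be an n×n pattern matrix and B an n×m pattern matrix. Define the pattern matrices A' ∈ {0,?}^{n×n} and B' ∈ {0,?}^{n×m} by: A'_ij = 0 if and only if A_ij = 0 (and A'_ij = ? otherwise), and B'_ij = 0 if and only if B_ij = 0 (and B'_ij = ? otherwise). Then (A,B) is weakly structurally controllable (i.e., there exist A ∈ P(A) and B ∈ P(B) such that the pair (A,B) is controllable) if and only if (A',B') is weakly structurally controllable. -/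
open Matrix

/-- The structured system `(𝒜, ℬ)` is weakly structurally controllable: some member of
the family is controllable. -/
def WeakStrControllable {n m : ℕ} (𝒜 : Matrix (Fin n) (Fin n) PSym)
    (ℬ : Matrix (Fin n) (Fin m) PSym) : Prop :=
  ∃ A ∈ PatternClass 𝒜, ∃ B ∈ PatternClass ℬ, Controllable A B

/-! A controllable pair in the relaxed class `P(𝒜') × P(ℬ')` vanishes at least where `𝒜`, `ℬ`
have `0`, and only fails to lie in `P(𝒜) × P(ℬ)` at `∗` entries where it vanishes. Move it along
`t ↦ (A + t • E, B + t • F)`, with `E`, `F` the indicators of those entries. For real pairs the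
Hautus test is equivalent to `det (K Kᵀ) ≠ 0`, `K` the Kalman matrix; along the line this
determinant is a polynomial in `t`, nonzero at `t = 0`, so all but finitely many `t ≠ 0` give a
controllable pair in `P(𝒜) × P(ℬ)`. The converse holds because `P(𝒜) ⊆ P(𝒜')`. -/

open Polynomial

namespace Matrix

section Field

variable {K : Type*} [Field K] {m n : Type*} [Fintype m]

theorem rank_eq_card_iff_vecMul_eq_zero_s14 [Fintype n] {M : Matrix m n K} :
    M.rank = Fintype.card m ↔ ∀ v : m → K, v ᵥ* M = 0 → v = 0 := by
  rw [rank_eq_finrank_span_row, ← Set.finrank, eq_comm,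
    ← linearIndependent_iff_card_eq_finrank_span, ← vecMul_injective_iff]
  exact injective_iff_map_eq_zero (vecMulLinear M)

variable [DecidableEq m]

theorem rank_eq_card_iff_det_ne_zero {M : Matrix m m K} :
    M.rank = Fintype.card m ↔ M.det ≠ 0 := by
  refine ⟨fun h hdet => ?_, rank_of_det_ne_zero⟩
  obtain ⟨v, hv, hvM⟩ := exists_vecMul_eq_zero_iff.mpr hdet
  exact hv (rank_eq_card_iff_vecMul_eq_zero_s14.mp h v hvM)

theorem vecMul_fromCols_sub_smul_one_eq_zero_iff [Fintype n] (A : Matrix m m K)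
    (B : Matrix m n K) (l : K) (v : m → K) :
    v ᵥ* fromCols (A - l • 1) B = 0 ↔ v ᵥ* A = l • v ∧ v ᵥ* B = 0 := by
  rw [vecMul_fromCols, ← Sum.elim_zero_zero, Sum.elim_eq_iff, vecMul_sub, vecMul_smul, vecMul_one,
    sub_eq_zero]

theorem exists_eigenvector_vecMul_eq_zero [IsAlgClosed K] {A : Matrix m m K} {B : Matrix m n K}
    {v : m → K} (hv : v ≠ 0) (h : ∀ k : ℕ, v ᵥ* (A ^ k * B) = 0) :
    ∃ w ≠ 0, ∃ μ : K, w ᵥ* A = μ • w ∧ w ᵥ* B = 0 := by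
  let W : Submodule K (m → K) := ⨅ k : ℕ, LinearMap.ker (vecMulLinear (A ^ k * B))
  have hW : ∀ x ∈ W, vecMulLinear A x ∈ W := by
    simp only [W, Submodule.mem_iInf, LinearMap.mem_ker, vecMulLinear_apply, vecMul_vecMul]
    intro x hx k
    rw [← Matrix.mul_assoc, ← pow_succ']
    exact hx (k + 1)
  have hvW : v ∈ W := Submodule.mem_iInf _ |>.mpr h
  have : Nontrivial W := Submodule.nontrivial_iff_ne_bot.mpr fun hbot =>
    hv ((Submodule.mem_bot K).mp (hbot ▸ hvW))
  obtain ⟨μ, hμ⟩ := Module.End.exists_eigenvalue ((vecMulLinear A).restrict hW)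
  obtain ⟨w, hw⟩ := hμ.exists_hasEigenvector
  refine ⟨w, by simpa using hw.2, μ, ?_, ?_⟩
  · simpa [LinearMap.restrict_apply] using congrArg Subtype.val hw.apply_eq_smul
  · simpa using (Submodule.mem_iInf _).mp w.2 0

end Field

section CommRing

variable {R : Type*} [CommRing R] {m n : Type*} [Fintype m] [DecidableEq m]

/-- The Kalman matrix `[B, AB, …, A^(N-1) B]` of a pair, `N` the size of `A`; the column
`(k, j)` is column `j` of `A ^ k * B`. -/
def kalmanMatrix (A : Matrix m m R) (B : Matrix m n R) : Matrix m (Fin (Fintype.card m) × n) R :=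
  of fun i p => (A ^ (p.1 : ℕ) * B) i p.2

theorem kalmanMatrix_map {S : Type*} [CommRing S] (f : R →+* S) (A : Matrix m m R)
    (B : Matrix m n R) : (kalmanMatrix A B).map f = kalmanMatrix (A.map f) (B.map f) := by
  ext i ⟨k, j⟩
  simp only [kalmanMatrix, map_apply, of_apply, ← Matrix.map_pow, ← Matrix.map_mul]

theorem vecMul_kalmanMatrix_eq_zero_iff (A : Matrix m m R) (B : Matrix m n R) (v : m → R) :
    v ᵥ* kalmanMatrix A B = 0 ↔ ∀ k < Fintype.card m, v ᵥ* (A ^ k * B) = 0 := by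
  simp only [funext_iff, Prod.forall, Fin.forall_iff]
  rfl

/-- By Cayley–Hamilton, `A ^ k` is a combination of the powers `A ^ i` with `i < card m`. -/
theorem vecMul_pow_mul_eq_zero_of_forall_lt_card [Nontrivial R] {A : Matrix m m R}
    {B : Matrix m n R} {v : m → R} (h : ∀ k < Fintype.card m, v ᵥ* (A ^ k * B) = 0) (k : ℕ) :
    v ᵥ* (A ^ k * B) = 0 := by
  rw [pow_eq_aeval_mod_charpoly, aeval_eq_sum_range, Matrix.sum_mul, vecMul_sum]
  refine Finset.sum_eq_zero fun i _ => ?_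
  rw [smul_mul, vecMul_smul]
  by_cases hi : i < Fintype.card m
  · rw [h i hi, smul_zero]
  · refine (congrArg (· • _) (coeff_eq_zero_of_degree_lt ?_)).trans (zero_smul _ _)
    calc (X ^ k %ₘ A.charpoly).degree < A.charpoly.degree :=
          degree_modByMonic_lt _ A.charpoly_monic
      _ = Fintype.card m := A.charpoly_degree_eq_dim
      _ ≤ i := by exact_mod_cast not_lt.mp hi

end CommRing

theorem forall_rank_fromCols_eq_card_iff_rank_kalmanMatrix {K : Type*} [Field K]
    [IsAlgClosed K] {m n : Type*} [Fintype m] [DecidableEq m] [Fintype n] (A : Matrix m m K)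
    (B : Matrix m n K) :
    (∀ l : K, (fromCols (A - l • 1) B).rank = Fintype.card m) ↔
      (kalmanMatrix A B).rank = Fintype.card m := by
  simp only [rank_eq_card_iff_vecMul_eq_zero_s14, vecMul_fromCols_sub_smul_one_eq_zero_iff,
    vecMul_kalmanMatrix_eq_zero_iff, and_imp]
  constructor
  · intro h v hv
    by_contra hv0
    obtain ⟨w, hw0, μ, hwA, hwB⟩ :=
      exists_eigenvector_vecMul_eq_zero hv0 (vecMul_pow_mul_eq_zero_of_forall_lt_card hv)
    exact hw0 (h μ w hwA hwB)
  · intro h l v hvA hvB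
    have hall : ∀ k : ℕ, v ᵥ* (A ^ k * B) = 0 := by
      intro k
      induction k with
      | zero => simpa using hvB
      | succ k ih =>
        rw [pow_succ', Matrix.mul_assoc, ← vecMul_vecMul, hvA, smul_vecMul, ih, smul_zero]
    exact h v fun k _ => hall k

open scoped ComplexOrder in
theorem rank_map_ofReal_eq_card_iff {m n : Type*} [Fintype m] [Fintype n] (M : Matrix m n ℝ) :
    (M.map Complex.ofReal).rank = Fintype.card m ↔ M.rank = Fintype.card m := by
  classical
  have hgram : M.map Complex.ofReal * (M.map Complex.ofReal)ᴴ =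
      (M * Mᵀ).map Complex.ofRealHom := by
    rw [Matrix.map_mul, transpose_map, conjTranspose]
    congr 1
    ext i j
    simp
  rw [← rank_self_mul_conjTranspose, hgram, ← M.rank_self_mul_transpose,
    rank_eq_card_iff_det_ne_zero, rank_eq_card_iff_det_ne_zero, ← RingHom.mapMatrix_apply,
    ← RingHom.map_det, _root_.map_ne_zero]

end Matrix

open Matrix

theorem controllable_iff_det_kalmanMatrix_mul_transpose_ne_zero {n m : ℕ}
    (A : Matrix (Fin n) (Fin n) ℝ) (B : Matrix (Fin n) (Fin m) ℝ) :
    Controllable A B ↔ (kalmanMatrix A B * (kalmanMatrix A B)ᵀ).det ≠ 0 := by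
  have hmap : (kalmanMatrix A B).map Complex.ofReal =
      kalmanMatrix (A.map Complex.ofReal) (B.map Complex.ofReal) :=
    kalmanMatrix_map Complex.ofRealHom A B
  calc Controllable A B
      ↔ (kalmanMatrix (A.map Complex.ofReal) (B.map Complex.ofReal)).rank =
          Fintype.card (Fin n) := by
        simpa only [Controllable, Fintype.card_fin] using
          forall_rank_fromCols_eq_card_iff_rank_kalmanMatrix (A.map Complex.ofReal)
            (B.map Complex.ofReal)
    _ ↔ (kalmanMatrix A B).rank = Fintype.card (Fin n) := by
        rw [← hmap, rank_map_ofReal_eq_card_iff]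
    _ ↔ _ := by rw [← rank_self_mul_transpose, rank_eq_card_iff_det_ne_zero]

theorem Controllable.finite_setOf_not_controllable_add_smul {n m : ℕ}
    {A : Matrix (Fin n) (Fin n) ℝ} {B : Matrix (Fin n) (Fin m) ℝ} (h : Controllable A B)
    (E : Matrix (Fin n) (Fin n) ℝ) (F : Matrix (Fin n) (Fin m) ℝ) :
    {t : ℝ | ¬Controllable (A + t • E) (B + t • F)}.Finite := by
  let K := kalmanMatrix (A.map C + (X : ℝ[X]) • E.map C) (B.map C + (X : ℝ[X]) • F.map C)
  have heval : ∀ t : ℝ, (K * Kᵀ).det.eval t =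
      (kalmanMatrix (A + t • E) (B + t • F) * (kalmanMatrix (A + t • E) (B + t • F))ᵀ).det := by
    intro t
    rw [← coe_evalRingHom, RingHom.map_det, RingHom.mapMatrix_apply, Matrix.map_mul,
      transpose_map, kalmanMatrix_map]
    congr <;> ext <;> simp [mul_comm (t : ℝ)]
  have hK : (K * Kᵀ).det ≠ 0 := fun h0 => by
    have := heval 0
    rw [h0] at this
    simp only [eval_zero, zero_smul, add_zero] at this
    exact (controllable_iff_det_kalmanMatrix_mul_transpose_ne_zero A B).mp h this.symm
  refine (finite_setOfPred_isRoot hK).subset fun t ht => ?_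
  rw [Set.mem_ofPred_eq, controllable_iff_det_kalmanMatrix_mul_transpose_ne_zero, not_not] at ht
  exact (heval t).trans ht

section Pattern

variable {R C : Type*}

theorem mem_patternClass_iff_of_eq_ite {M M' : Matrix R C PSym}
    (hM' : ∀ i j, M' i j = if M i j = PSym.zero then PSym.zero else PSym.arb)
    {A : Matrix R C ℝ} :
    A ∈ PatternClass M' ↔ ∀ i j, M i j = PSym.zero → A i j = 0 := by
  simp only [PatternClass, Set.mem_ofPred_eq, hM']
  refine forall₂_congr fun i j => ?_
  split_ifs <;> simp_all

theorem exists_forall_ne_zero_add_smul_mem_patternClass {M : Matrix R C PSym}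
    {A : Matrix R C ℝ} (hA : ∀ i j, M i j = PSym.zero → A i j = 0) :
    ∃ E : Matrix R C ℝ, ∀ t : ℝ, t ≠ 0 → A + t • E ∈ PatternClass M := by
  classical
  refine ⟨of fun i j => if M i j = PSym.star ∧ A i j = 0 then 1 else 0, fun t ht i j =>
    ⟨fun hz => ?_, fun hs => ?_⟩⟩
  · simp [hz, hA i j hz]
  · by_cases hAij : A i j = 0 <;> simp [hs, hAij, ht]

end Pattern

/-- **Remark 1.** Weak structural controllability of `(𝒜, ℬ)` is equivalent to that of
`(𝒜', ℬ')`, where `𝒜'` and `ℬ'` are obtained by replacing every non-`0` entry by `?`. -/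
theorem weak_controllability_reduction {n m : ℕ} (𝒜 : Matrix (Fin n) (Fin n) PSym)
    (ℬ : Matrix (Fin n) (Fin m) PSym)
    (𝒜' : Matrix (Fin n) (Fin n) PSym) (ℬ' : Matrix (Fin n) (Fin m) PSym)
    (hA' : ∀ i j, 𝒜' i j = if 𝒜 i j = PSym.zero then PSym.zero else PSym.arb)
    (hB' : ∀ i j, ℬ' i j = if ℬ i j = PSym.zero then PSym.zero else PSym.arb) :
    WeakStrControllable 𝒜 ℬ ↔ WeakStrControllable 𝒜' ℬ' := by
  simp only [WeakStrControllable, mem_patternClass_iff_of_eq_ite hA',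
    mem_patternClass_iff_of_eq_ite hB']
  constructor
  · rintro ⟨A, hA, B, hB, hAB⟩
    exact ⟨A, fun i j => (hA i j).1, B, fun i j => (hB i j).1, hAB⟩
  · rintro ⟨A, hA, B, hB, hAB⟩
    obtain ⟨E, hE⟩ := exists_forall_ne_zero_add_smul_mem_patternClass hA
    obtain ⟨F, hF⟩ := exists_forall_ne_zero_add_smul_mem_patternClass hB
    obtain ⟨t, ht⟩ :=
      ((hAB.finite_setOf_not_controllable_add_smul E F).insert 0).infinite_compl.nonempty
    rw [Set.mem_compl_iff, Set.mem_insert_iff, Set.mem_ofPred_eq, not_or, not_not] at ht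
    exact ⟨A + t • E, hE t ht.1, B + t • F, hF t ht.1, ht.2⟩
end
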